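/- Assume the Bregman PDMM setup (see context) with the mirror-averaging optimality conditions, primal optimality conditions and dual updates holding at every iteration t ∈ ℕ, parameters satisfying 0 < γ < μσ and τ ≤ ρ(μσ − γ), and a KKT point (x*, ν*) as in the context. With V(s) = (1/(2τρ)) Σ_i ‖ν*_i − ν_i^s‖_2² + Σ_i B_φ(x*, y_i^s) + Σ_i (δ_i/ρ) B_{φ_i}(x*, x_i^s) and R(t+1) = (γ/2) Σ_i ‖x_i^{t+1} − Σ_j P_{ij} x_j^{t+1}‖_2² + Σ_i B_φ(x_i^{t+1}, y_i^t) + Σ_i (δ_i/ρ) B_{φ_i}(x_i^{t+1}, x_i^t), one has Σ_{t=0}^{T−1} R(t+1) ≤ V(0) for every T, and consequently R(t+1) → 0 as t → ∞. -/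

import Mathlib

/-!
A Lyapunov argument. Adding the subgradient inequalities of the primal step and of the KKT
point, and rewriting the gradient differences by the three-point identity of Bregman
divergences, bounds the change of the Bregman distances to `x*` by dual inner products. As `P`
is symmetric and stochastic these collapse, through the dual update, into the decrease of
`‖ν* - ν‖² / (2τρ)` plus `τ/(2ρ)` times the consensus residual `Σ ‖x_i - Σ_j P_ij x_j‖²`. The
mirror-averaging step passes `B_φ(x*, ·)` from the `x`-blocks to the `y`-blocks and releases
`Σ P_ij B_φ(y_i, x_j)`, which by strong convexity (with `σ‖w‖₂² ≤ ‖w‖_p²`) and `P² ≼ P`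
dominates `μσ/2` times the consensus residual. Hence `τ ≤ ρ(μσ - γ)` gives
`R(t+1) + V(t+1) ≤ V(t)`, which telescopes; since `R ≥ 0`, the residuals are summable.
-/

open scoped RealInnerProductSpace BigOperators
open Filter

/-- The Bregman divergence `B_φ(u,v) = φ(u) − φ(v) − ⟨∇φ(v), u − v⟩`. -/
noncomputable def breg {n : ℕ} (φ : EuclideanSpace ℝ (Fin n) → ℝ)
    (u v : EuclideanSpace ℝ (Fin n)) : ℝ :=
  φ u - φ v - ⟪gradient φ v, u - v⟫

/-- The ℓ_p norm on ℝ^n: `‖w‖_p = (Σ_k |w_k|^p)^(1/p)`. -/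
noncomputable def lpnorm {n : ℕ} (p : ℝ) (w : EuclideanSpace ℝ (Fin n)) : ℝ :=
  (∑ k, |w k| ^ p) ^ (1 / p)

section Bregman

variable {n : ℕ}

theorem inner_gradient_sub_gradient_eq_breg (φ : EuclideanSpace ℝ (Fin n) → ℝ)
    (u a b : EuclideanSpace ℝ (Fin n)) :
    ⟪gradient φ a - gradient φ b, u - a⟫ = breg φ u b - breg φ u a - breg φ a b := by
  simp only [breg, inner_sub_left, inner_sub_right]
  ring

theorem breg_nonneg {φ : EuclideanSpace ℝ (Fin n) → ℝ} (hd : Differentiable ℝ φ)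
    (hc : ConvexOn ℝ Set.univ φ) (u v : EuclideanSpace ℝ (Fin n)) : 0 ≤ breg φ u v := by
  have hline : ConvexOn ℝ Set.univ (φ ∘ AffineMap.lineMap (k := ℝ) v u) := by
    simpa using hc.comp_affineMap (AffineMap.lineMap (k := ℝ) v u)
  have hderiv : HasDerivAt (φ ∘ AffineMap.lineMap (k := ℝ) v u) ⟪gradient φ v, u - v⟫ 0 := by
    have := (hd (AffineMap.lineMap v u (0 : ℝ))).hasGradientAt.hasFDerivAt.comp_hasDerivAt
      (0 : ℝ) AffineMap.hasDerivAt_lineMap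
    simpa using this
  have := hline.le_slope_of_hasDerivAt (Set.mem_univ 0) (Set.mem_univ 1) one_pos hderiv
  simp only [slope_def_field, Function.comp_apply, AffineMap.lineMap_apply_zero,
    AffineMap.lineMap_apply_one, sub_zero, div_one] at this
  simp only [breg]
  linarith

end Bregman

theorem Real.sum_rpow_le_rpow_sum {ι : Type*} (s : Finset ι) {b : ι → ℝ}
    (hb : ∀ k, 0 ≤ b k) {q : ℝ} (hq : 1 ≤ q) : ∑ k ∈ s, b k ^ q ≤ (∑ k ∈ s, b k) ^ q := by
  classical
  induction s using Finset.induction_on with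
  | empty => simp [Real.zero_rpow (by linarith : q ≠ 0)]
  | insert k s hk ih =>
    rw [Finset.sum_insert hk, Finset.sum_insert hk]
    exact (add_le_add le_rfl ih).trans
      (Real.add_rpow_le_rpow_add (hb k) (Finset.sum_nonneg fun j _ => hb j) hq)

section LpNorm

variable {n : ℕ}

theorem lpnorm_sq (p : ℝ) (w : EuclideanSpace ℝ (Fin n)) :
    lpnorm p w ^ 2 = (∑ k, |w k| ^ p) ^ (2 / p) := by
  rw [lpnorm, ← Real.rpow_natCast, ← Real.rpow_mul (by positivity)]
  congr 1
  ring

theorem norm_sq_eq_sum_abs_rpow_two (w : EuclideanSpace ℝ (Fin n)) :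
    ‖w‖ ^ 2 = ∑ k, |w k| ^ (2 : ℝ) := by
  simp [EuclideanSpace.norm_sq_eq]

theorem sq_norm_le_lpnorm_sq {p : ℝ} (hp : 1 ≤ p) (hp2 : p ≤ 2)
    (w : EuclideanSpace ℝ (Fin n)) :
    ‖w‖ ^ 2 ≤ lpnorm p w ^ 2 := by
  have hp0 : 0 < p := by linarith
  rw [lpnorm_sq p, norm_sq_eq_sum_abs_rpow_two]
  calc ∑ k, |w k| ^ (2 : ℝ) = ∑ k, (|w k| ^ p) ^ (2 / p) := by
        refine Finset.sum_congr rfl fun k _ => ?_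
        rw [← Real.rpow_mul (abs_nonneg _), mul_div_cancel₀ _ hp0.ne']
    _ ≤ (∑ k, |w k| ^ p) ^ (2 / p) :=
        Real.sum_rpow_le_rpow_sum _ (fun k => by positivity) ((one_le_div hp0).2 hp2)

theorem rpow_mul_sq_norm_le_lpnorm_sq {p : ℝ} (hp : 2 ≤ p) (w : EuclideanSpace ℝ (Fin n)) :
    (n : ℝ) ^ (2 / p - 1) * ‖w‖ ^ 2 ≤ lpnorm p w ^ 2 := by
  have hp0 : 0 < p := by linarith
  rcases n.eq_zero_or_pos with rfl | hn
  · simp [EuclideanSpace.norm_sq_eq, lpnorm_sq p]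
    positivity
  have hn' : (0 : ℝ) < n := by exact_mod_cast hn
  have hholder := Real.rpow_sum_le_const_mul_sum_rpow_of_nonneg Finset.univ
    (f := fun k => |w k| ^ (2 : ℝ)) ((le_div_iff₀ two_pos).2 (by linarith))
    (fun k _ => by positivity)
  have hS2 : 0 ≤ ∑ k, |w k| ^ (2 : ℝ) := by positivity
  have hS : 0 ≤ ∑ k, |w k| ^ p := by positivity
  have habs : ∀ k, (|w k| ^ (2 : ℝ)) ^ (p / 2) = |w k| ^ p := fun k => by
    rw [← Real.rpow_mul (abs_nonneg _), mul_div_cancel₀ _ two_ne_zero]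
  simp only [habs, Finset.card_univ, Fintype.card_fin] at hholder
  rw [lpnorm_sq p, norm_sq_eq_sum_abs_rpow_two]
  calc (n : ℝ) ^ (2 / p - 1) * ∑ k, |w k| ^ (2 : ℝ)
      = (n : ℝ) ^ (2 / p - 1) * ((∑ k, |w k| ^ (2 : ℝ)) ^ (p / 2)) ^ (2 / p) := by
        rw [← Real.rpow_mul hS2, div_mul_div_cancel₀ two_ne_zero, div_self hp0.ne', Real.rpow_one]
    _ ≤ (n : ℝ) ^ (2 / p - 1) * ((n : ℝ) ^ (p / 2 - 1) * ∑ k, |w k| ^ p) ^ (2 / p) := by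
        gcongr
    _ = (∑ k, |w k| ^ p) ^ (2 / p) := by
        rw [Real.mul_rpow (by positivity) hS, ← Real.rpow_mul hn'.le, ← mul_assoc,
          ← Real.rpow_add hn']
        have : 2 / p - 1 + (p / 2 - 1) * (2 / p) = 0 := by field_simp; ring
        rw [this, Real.rpow_zero, one_mul]

theorem min_one_rpow_mul_sq_norm_le_lpnorm_sq {p : ℝ} (hp : 1 ≤ p)
    (w : EuclideanSpace ℝ (Fin n)) :
    min 1 ((n : ℝ) ^ (2 / p - 1)) * ‖w‖ ^ 2 ≤ lpnorm p w ^ 2 := by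
  rcases le_total p 2 with hp2 | hp2
  · exact (mul_le_of_le_one_left (sq_nonneg _) (min_le_left _ _)).trans
      (sq_norm_le_lpnorm_sq hp hp2 w)
  · exact (mul_le_mul_of_nonneg_right (min_le_right _ _) (sq_nonneg _)).trans
      (rpow_mul_sq_norm_le_lpnorm_sq hp2 w)

end LpNorm

section InnerProduct

open Matrix

variable {ι E : Type*} [Fintype ι] [NormedAddCommGroup E] [InnerProductSpace ℝ E]

theorem inner_sub_nonneg_of_subgradient {f : E → ℝ} {a b h h' : E}
    (ha : ∀ v, f v ≥ f a + ⟪h, v - a⟫) (hb : ∀ v, f v ≥ f b + ⟪h', v - b⟫) :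
    0 ≤ ⟪h - h', a - b⟫ := by
  have hab := ha b
  have hba := hb a
  rw [← neg_sub a b, inner_neg_right] at hab
  rw [inner_sub_left]
  linarith

theorem inner_eq_of_eq_add_smul {τ : ℝ} (hτ : τ ≠ 0) {ν ν' νstar r : E}
    (hν' : ν' = ν + τ • r) :
    ⟪νstar - ν, r⟫ = (‖νstar - ν‖ ^ 2 - ‖νstar - ν'‖ ^ 2) / (2 * τ) + τ / 2 * ‖r‖ ^ 2 := by
  have hsplit : νstar - ν' = (νstar - ν) - τ • r := by rw [hν']; abel
  rw [hsplit, norm_sub_sq_real (νstar - ν), real_inner_smul_right, norm_smul, Real.norm_eq_abs,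
    mul_pow, sq_abs]
  field_simp
  ring

-- `mix` in the names below refers to the blocks `∑ j, P i j • x j` of `P` applied to `x`.

theorem Matrix.PosSemidef.sum_mul_inner_nonneg {M : Matrix ι ι ℝ} (hM : M.PosSemidef)
    (x : ι → E) : 0 ≤ ∑ i, ∑ j, M i j * ⟪x i, x j⟫ := by
  obtain ⟨k, v, rfl⟩ := posSemidef_iff_eq_sum_vecMulVec.mp hM
  have hgram : ∑ i, ∑ j, (∑ l, vecMulVec (v l) (star (v l))) i j * ⟪x i, x j⟫
      = ∑ l, ‖∑ i, v l i • x i‖ ^ 2 := by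
    simp only [← real_inner_self_eq_norm_sq, inner_sum, sum_inner, real_inner_smul_left,
      real_inner_smul_right, sum_apply, vecMulVec_apply, star_trivial,
      Finset.sum_mul]
    symm
    rw [Finset.sum_comm]
    refine Finset.sum_congr rfl fun i _ => ?_
    rw [Finset.sum_comm]
    refine Finset.sum_congr rfl fun j _ => Finset.sum_congr rfl fun l _ => ?_
    rw [real_inner_comm, mul_assoc]
  rw [hgram]
  positivity

theorem Matrix.IsSymm.sum_col_eq_one {P : Matrix ι ι ℝ} (hP : P.IsSymm)
    (hrow : ∀ i, ∑ j, P i j = 1) (j : ι) : ∑ i, P i j = 1 := by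
  simpa only [hP.apply] using hrow j

theorem Matrix.IsSymm.posSemidef_one_sub [DecidableEq ι] {P : Matrix ι ι ℝ} (hP : P.IsSymm)
    (hnn : ∀ i j, 0 ≤ P i j) (hrow : ∀ i, ∑ j, P i j = 1) : (1 - P).PosSemidef := by
  refine .of_dotProduct_mulVec_nonneg
    (isHermitian_one.sub (isHermitian_iff_isSymm.mpr hP)) fun x => ?_
  have hdirichlet : star x ⬝ᵥ ((1 - P) *ᵥ x) = (∑ i, ∑ j, P i j * (x i - x j) ^ 2) / 2 := by
    have hrow' : ∑ i, ∑ j, P i j * x i ^ 2 = ∑ i, x i ^ 2 := by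
      simp only [← Finset.sum_mul, hrow, one_mul]
    have hcol' : ∑ i, ∑ j, P i j * x j ^ 2 = ∑ i, x i ^ 2 := by
      rw [Finset.sum_comm]
      simp only [← Finset.sum_mul, hP.sum_col_eq_one hrow, one_mul]
    have hcross : ∑ i, ∑ j, P i j * (2 * x i * x j) = 2 * ∑ i, x i * ∑ j, P i j * x j := by
      simp only [Finset.mul_sum]
      exact Finset.sum_congr rfl fun i _ => Finset.sum_congr rfl fun j _ => by ring
    simp only [sub_mulVec, one_mulVec, dotProduct_sub, star_trivial, sub_sq,
      mul_add, mul_sub, Finset.sum_add_distrib, Finset.sum_sub_distrib, hrow', hcol', hcross]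
    simp only [dotProduct, mulVec, ← sq]
    ring
  rw [hdirichlet]
  exact div_nonneg (Finset.sum_nonneg fun i _ => Finset.sum_nonneg fun j _ =>
    mul_nonneg (hnn i j) (sq_nonneg _)) two_pos.le

theorem Matrix.PosSemidef.sub_mul_self {R : Type*} [Ring R] [PartialOrder R] [StarRing R]
    [AddLeftMono R] [DecidableEq ι] {P : Matrix ι ι R} (hP : P.PosSemidef)
    (h1P : (1 - P).PosSemidef) : (P - P * P).PosSemidef := by
  have hPh : Pᴴ = P := hP.1
  convert (h1P.conjTranspose_mul_mul_same P).add (hP.conjTranspose_mul_mul_same (1 - P)) using 1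
  rw [hPh, conjTranspose_sub, conjTranspose_one, hPh]
  simp only [sub_mul, mul_sub, one_mul, mul_one, mul_assoc]
  abel

theorem sum_norm_sq_mix_le_sum_inner_mix {P : Matrix ι ι ℝ} (hPsym : P.IsSymm)
    (hnn : ∀ i j, 0 ≤ P i j) (hrow : ∀ i, ∑ j, P i j = 1) (hpsd : P.PosSemidef) (x : ι → E) :
    ∑ i, ‖∑ j, P i j • x j‖ ^ 2 ≤ ∑ i, ⟪x i, ∑ j, P i j • x j⟫ := by
  classical
  have hgram := (hpsd.sub_mul_self (hPsym.posSemidef_one_sub hnn hrow)).sum_mul_inner_nonneg x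
  have hexp : ∑ i, ∑ j, (P - P * P) i j * ⟪x i, x j⟫
      = ∑ i, ⟪x i, ∑ j, P i j • x j⟫ - ∑ i, ‖∑ j, P i j • x j‖ ^ 2 := by
    simp only [Matrix.sub_apply, Matrix.mul_apply, sub_mul, Finset.sum_sub_distrib, inner_sum,
      real_inner_smul_right, ← real_inner_self_eq_norm_sq, sum_inner, real_inner_smul_left,
      Finset.sum_mul]
    congr 1
    rw [Finset.sum_comm]
    symm
    rw [Finset.sum_comm]
    refine Finset.sum_congr rfl fun b _ => ?_
    rw [Finset.sum_comm]
    refine Finset.sum_congr rfl fun a _ => Finset.sum_congr rfl fun k _ => ?_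
    rw [hPsym.apply a k]
    ring
  linarith

theorem Matrix.IsSymm.sum_sum_smul {M : Type*} [AddCommMonoid M] [Module ℝ M]
    {P : Matrix ι ι ℝ} (hP : P.IsSymm) (hrow : ∀ i, ∑ j, P i j = 1) (a : ι → M) :
    ∑ i, ∑ j, P i j • a j = ∑ j, a j := by
  rw [Finset.sum_comm]
  simp only [← Finset.sum_smul, hP.sum_col_eq_one hrow, one_smul]

theorem Matrix.IsSymm.sum_inner_mix_comm {P : Matrix ι ι ℝ} (hP : P.IsSymm) (a z : ι → E) :
    ∑ i, ⟪∑ j, P i j • a j, z i⟫ = ∑ i, ⟪a i, ∑ j, P i j • z j⟫ := by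
  simp only [sum_inner, inner_sum, real_inner_smul_left, real_inner_smul_right]
  rw [Finset.sum_comm]
  exact Finset.sum_congr rfl fun i _ => Finset.sum_congr rfl fun j _ => by rw [hP.apply i j]

theorem Matrix.IsSymm.sum_inner_mix_sub_sub {P : Matrix ι ι ℝ} (hP : P.IsSymm)
    (hrow : ∀ i, ∑ j, P i j = 1) (a z : ι → E) (c : E) :
    ∑ i, ⟪(∑ j, P i j • a j) - a i, z i - c⟫ = ∑ i, ⟪-a i, z i - ∑ j, P i j • z j⟫ := by
  have hc : ∑ i, ⟪∑ j, P i j • a j, c⟫ = ∑ i, ⟪a i, c⟫ := by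
    simp only [← sum_inner, hP.sum_sum_smul hrow]
  simp only [inner_sub_left, inner_sub_right, inner_neg_left, Finset.sum_sub_distrib,
    Finset.sum_neg_distrib, hc, hP.sum_inner_mix_comm]
  ring

theorem sum_norm_sub_mix_sq_le {P : Matrix ι ι ℝ} (hPsym : P.IsSymm) (hnn : ∀ i j, 0 ≤ P i j)
    (hrow : ∀ i, ∑ j, P i j = 1) (hpsd : P.PosSemidef) (x y : ι → E) :
    ∑ i, ‖x i - ∑ j, P i j • x j‖ ^ 2 ≤ ∑ i, ∑ j, P i j * ‖y i - x j‖ ^ 2 := by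
  have hy : ∀ i, ∑ j, P i j * ‖y i - x j‖ ^ 2
      = ‖y i - ∑ j, P i j • x j‖ ^ 2 - ‖∑ j, P i j • x j‖ ^ 2 + ∑ j, P i j * ‖x j‖ ^ 2 := by
    intro i
    simp only [norm_sub_sq_real, mul_add, mul_sub, Finset.sum_add_distrib, Finset.sum_sub_distrib,
      ← Finset.sum_mul, hrow, inner_sum, real_inner_smul_right, mul_left_comm _ (2 : ℝ),
      ← Finset.mul_sum]
    ring
  have hcontract := sum_norm_sq_mix_le_sum_inner_mix hPsym hnn hrow hpsd x
  have hy' : 0 ≤ ∑ i, ‖y i - ∑ j, P i j • x j‖ ^ 2 := by positivity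
  have hcol : ∑ i, ∑ j, P i j * ‖x j‖ ^ 2 = ∑ j, ‖x j‖ ^ 2 :=
    hPsym.sum_sum_smul hrow (fun j => ‖x j‖ ^ 2)
  have hx : ∑ i, ‖x i - ∑ j, P i j • x j‖ ^ 2 = ∑ i, ‖x i‖ ^ 2
      - 2 * ∑ i, ⟪x i, ∑ j, P i j • x j⟫ + ∑ i, ‖∑ j, P i j • x j‖ ^ 2 := by
    simp only [norm_sub_sq_real, Finset.sum_add_distrib, Finset.sum_sub_distrib, Finset.mul_sum]
  rw [Finset.sum_congr rfl fun i _ => hy i]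
  simp only [Finset.sum_add_distrib, Finset.sum_sub_distrib, hcol]
  linarith

end InnerProduct

section PDMM

variable {n m : ℕ}

def IsKKTPoint (𝒳 : Set (EuclideanSpace ℝ (Fin n)))
    (f : Fin m → EuclideanSpace ℝ (Fin n) → ℝ) (P : Matrix (Fin m) (Fin m) ℝ)
    (xstar : EuclideanSpace ℝ (Fin n)) (νstar : Fin m → EuclideanSpace ℝ (Fin n)) : Prop :=
  ∀ i, ∃ g : EuclideanSpace ℝ (Fin n),
    (∀ v ∈ 𝒳, 0 ≤ ⟪g, xstar - v⟫) ∧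
    ∀ v, f i v ≥ f i xstar + ⟪-νstar i + (∑ j, P i j • νstar j) - g, v - xstar⟫

def IsPrimalStep (𝒳 : Set (EuclideanSpace ℝ (Fin n)))
    (f : Fin m → EuclideanSpace ℝ (Fin n) → ℝ) (P : Matrix (Fin m) (Fin m) ℝ)
    (φ : EuclideanSpace ℝ (Fin n) → ℝ) (φi : Fin m → EuclideanSpace ℝ (Fin n) → ℝ) (ρ : ℝ)
    (δ : Fin m → ℝ) (x y ν x' : Fin m → EuclideanSpace ℝ (Fin n)) : Prop :=
  ∀ i, ∃ g : EuclideanSpace ℝ (Fin n),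
    (∀ v ∈ 𝒳, 0 ≤ ⟪g, x' i - v⟫) ∧
    ∀ v, f i v ≥ f i (x' i) +
      ⟪-ν i + (∑ j, P i j • ν j)
          - ρ • (gradient φ (x' i) - gradient φ (y i))
          - δ i • (gradient (φi i) (x' i) - gradient (φi i) (x i))
          - g, v - x' i⟫

def IsMirrorStep (𝒳 : Set (EuclideanSpace ℝ (Fin n))) (P : Matrix (Fin m) (Fin m) ℝ)
    (φ : EuclideanSpace ℝ (Fin n) → ℝ) (x y : Fin m → EuclideanSpace ℝ (Fin n)) : Prop :=
  ∀ i, ∀ u ∈ 𝒳, 0 ≤ ∑ j, P i j * ⟪gradient φ (y i) - gradient φ (x j), u - y i⟫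

noncomputable def pdmmLyapunov (φ : EuclideanSpace ℝ (Fin n) → ℝ)
    (φi : Fin m → EuclideanSpace ℝ (Fin n) → ℝ) (ρ τ : ℝ) (δ : Fin m → ℝ)
    (xstar : EuclideanSpace ℝ (Fin n)) (νstar x y ν : Fin m → EuclideanSpace ℝ (Fin n)) : ℝ :=
  1 / (2 * τ * ρ) * ∑ i, ‖νstar i - ν i‖ ^ 2
    + (∑ i, breg φ xstar (y i))
    + ∑ i, δ i / ρ * breg (φi i) xstar (x i)

noncomputable def pdmmResidual (P : Matrix (Fin m) (Fin m) ℝ)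
    (φ : EuclideanSpace ℝ (Fin n) → ℝ) (φi : Fin m → EuclideanSpace ℝ (Fin n) → ℝ)
    (ρ γ : ℝ) (δ : Fin m → ℝ) (x y x' : Fin m → EuclideanSpace ℝ (Fin n)) : ℝ :=
  γ / 2 * ∑ i, ‖x' i - ∑ j, P i j • x' j‖ ^ 2
    + (∑ i, breg φ (x' i) (y i))
    + ∑ i, δ i / ρ * breg (φi i) (x' i) (x i)

variable {𝒳 : Set (EuclideanSpace ℝ (Fin n))} {f : Fin m → EuclideanSpace ℝ (Fin n) → ℝ}
  {P : Matrix (Fin m) (Fin m) ℝ} {φ : EuclideanSpace ℝ (Fin n) → ℝ}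
  {φi : Fin m → EuclideanSpace ℝ (Fin n) → ℝ} {ρ τ γ κ : ℝ} {δ : Fin m → ℝ}
  {xstar : EuclideanSpace ℝ (Fin n)} {νstar x y ν x' y' ν' : Fin m → EuclideanSpace ℝ (Fin n)}

theorem IsPrimalStep.breg_le_inner (hprimal : IsPrimalStep 𝒳 f P φ φi ρ δ x y ν x')
    (hkkt : IsKKTPoint 𝒳 f P xstar νstar) (hxstar : xstar ∈ 𝒳) (hx' : ∀ i, x' i ∈ 𝒳)
    (i : Fin m) :
    ρ * (breg φ xstar (x' i) + breg φ (x' i) (y i) - breg φ xstar (y i))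
      + δ i * (breg (φi i) xstar (x' i) + breg (φi i) (x' i) (x i) - breg (φi i) xstar (x i))
      ≤ ⟪(∑ j, P i j • (ν j - νstar j)) - (ν i - νstar i), x' i - xstar⟫ := by
  obtain ⟨g, hg, hfg⟩ := hprimal i
  obtain ⟨gstar, hgstar, hfgstar⟩ := hkkt i
  have hmono := inner_sub_nonneg_of_subgradient hfg hfgstar
  have hnormal := hg xstar hxstar
  have hnormalstar := hgstar (x' i) (hx' i)
  have hφ := inner_gradient_sub_gradient_eq_breg φ xstar (x' i) (y i)
  have hφi := inner_gradient_sub_gradient_eq_breg (φi i) xstar (x' i) (x i)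
  rw [← neg_sub (x' i) xstar, inner_neg_right] at hnormalstar hφ hφi
  simp only [smul_sub, Finset.sum_sub_distrib, inner_sub_left, inner_add_left, inner_neg_left,
    real_inner_smul_left] at hmono hnormal hnormalstar hφ hφi ⊢
  linear_combination hmono + hnormal + hnormalstar + ρ * hφ + δ i * hφi

theorem IsMirrorStep.sum_breg_le (hmirror : IsMirrorStep 𝒳 P φ x y) (hPsym : P.IsSymm)
    (hrow : ∀ i, ∑ j, P i j = 1) {u : EuclideanSpace ℝ (Fin n)} (hu : u ∈ 𝒳) :
    ∑ i, breg φ u (y i) + ∑ i, ∑ j, P i j * breg φ (y i) (x j) ≤ ∑ i, breg φ u (x i) := by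
  have hnode : ∀ i, breg φ u (y i) + ∑ j, P i j * breg φ (y i) (x j)
      ≤ ∑ j, P i j * breg φ u (x j) := by
    intro i
    have h := hmirror i u hu
    simp only [inner_gradient_sub_gradient_eq_breg, mul_sub, Finset.sum_sub_distrib,
      ← Finset.sum_mul, hrow, one_mul] at h
    linarith
  calc ∑ i, breg φ u (y i) + ∑ i, ∑ j, P i j * breg φ (y i) (x j)
      ≤ ∑ i, ∑ j, P i j * breg φ u (x j) := by
        rw [← Finset.sum_add_distrib]
        exact Finset.sum_le_sum fun i _ => hnode i
    _ = ∑ i, breg φ u (x i) := hPsym.sum_sum_smul hrow (fun j => breg φ u (x j))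

theorem sum_norm_sub_mix_sq_le_sum_breg (hPsym : P.IsSymm) (hnn : ∀ i j, 0 ≤ P i j)
    (hrow : ∀ i, ∑ j, P i j = 1) (hpsd : P.PosSemidef) (hκ : 0 ≤ κ)
    (hstrong : ∀ u ∈ 𝒳, ∀ v ∈ 𝒳, κ / 2 * ‖u - v‖ ^ 2 ≤ breg φ u v)
    (hx : ∀ i, x i ∈ 𝒳) (hy : ∀ i, y i ∈ 𝒳) :
    κ / 2 * ∑ i, ‖x i - ∑ j, P i j • x j‖ ^ 2 ≤ ∑ i, ∑ j, P i j * breg φ (y i) (x j) :=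
  calc κ / 2 * ∑ i, ‖x i - ∑ j, P i j • x j‖ ^ 2
      ≤ κ / 2 * ∑ i, ∑ j, P i j * ‖y i - x j‖ ^ 2 :=
        mul_le_mul_of_nonneg_left (sum_norm_sub_mix_sq_le hPsym hnn hrow hpsd x y)
          (by positivity)
    _ = ∑ i, ∑ j, P i j * (κ / 2 * ‖y i - x j‖ ^ 2) := by
        simp only [Finset.mul_sum]
        exact Finset.sum_congr rfl fun i _ => Finset.sum_congr rfl fun j _ => by ring
    _ ≤ ∑ i, ∑ j, P i j * breg φ (y i) (x j) := by
        gcongr with i _ j _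
        · exact hnn i j
        · exact hstrong _ (hy i) _ (hx j)


theorem pdmmResidual_add_pdmmLyapunov_le (hPsym : P.IsSymm) (hnn : ∀ i j, 0 ≤ P i j)
    (hrow : ∀ i, ∑ j, P i j = 1) (hpsd : P.PosSemidef) (hρ : 0 < ρ) (hτ : 0 < τ) (hκ : 0 ≤ κ)
    (hstrong : ∀ u ∈ 𝒳, ∀ v ∈ 𝒳, κ / 2 * ‖u - v‖ ^ 2 ≤ breg φ u v)
    (hτρ : τ ≤ ρ * (κ - γ)) (hxstar : xstar ∈ 𝒳) (hkkt : IsKKTPoint 𝒳 f P xstar νstar)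
    (hx' : ∀ i, x' i ∈ 𝒳) (hy' : ∀ i, y' i ∈ 𝒳)
    (hprimal : IsPrimalStep 𝒳 f P φ φi ρ δ x y ν x')
    (hdual : ∀ i, ν' i = ν i + τ • (x' i - ∑ j, P i j • x' j))
    (hmirror : IsMirrorStep 𝒳 P φ x' y') :
    pdmmResidual P φ φi ρ γ δ x y x' + pdmmLyapunov φ φi ρ τ δ xstar νstar x' y' ν'
      ≤ pdmmLyapunov φ φi ρ τ δ xstar νstar x y ν := by
  have hnodes := Finset.sum_le_sum fun i (_ : i ∈ Finset.univ) =>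
    hprimal.breg_le_inner hkkt hxstar hx' i
  have hdual_sum : ∑ i, ⟪(∑ j, P i j • (ν j - νstar j)) - (ν i - νstar i), x' i - xstar⟫
      = (∑ i, ‖νstar i - ν i‖ ^ 2 - ∑ i, ‖νstar i - ν' i‖ ^ 2) / (2 * τ)
        + τ / 2 * ∑ i, ‖x' i - ∑ j, P i j • x' j‖ ^ 2 := by
    rw [hPsym.sum_inner_mix_sub_sub hrow (fun j => ν j - νstar j) x' xstar]
    simp only [neg_sub, inner_eq_of_eq_add_smul hτ.ne' (hdual _), Finset.sum_add_distrib,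
      ← Finset.sum_div, Finset.sum_sub_distrib, Finset.mul_sum]
  have hmirror_sum := hmirror.sum_breg_le hPsym hrow hxstar
  have hstrong_sum := sum_norm_sub_mix_sq_le_sum_breg hPsym hnn hrow hpsd hκ hstrong hx' hy'
  have hC : 0 ≤ ∑ i, ‖x' i - ∑ j, P i j • x' j‖ ^ 2 := by positivity
  have hδ : ∀ b : Fin m → ℝ, ρ * ∑ i, δ i / ρ * b i = ∑ i, δ i * b i := fun b => by
    rw [Finset.mul_sum]
    exact Finset.sum_congr rfl fun i _ => by field_simp
  have hν : ∀ D : ℝ, ρ * (1 / (2 * τ * ρ) * D) = D / (2 * τ) := fun D => by field_simp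
  refine le_of_mul_le_mul_left ?_ hρ
  simp only [pdmmLyapunov, pdmmResidual, mul_add, hδ, hν]
  simp only [mul_add, mul_sub, Finset.sum_add_distrib, Finset.sum_sub_distrib, ← Finset.mul_sum]
    at hnodes
  have hmirror_ρ := mul_le_mul_of_nonneg_left hmirror_sum hρ.le
  have hstrong_ρ := mul_le_mul_of_nonneg_left hstrong_sum hρ.le
  have hτρ_C := mul_le_mul_of_nonneg_right hτρ hC
  rw [hdual_sum] at hnodes
  ring_nf at hnodes hmirror_ρ hstrong_ρ hτρ_C ⊢
  linarith

theorem pdmmLyapunov_nonneg (hρ : 0 < ρ) (hτ : 0 < τ) (hδ : ∀ i, 0 ≤ δ i)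
    (hφ : ∀ u ∈ 𝒳, ∀ v ∈ 𝒳, 0 ≤ breg φ u v) (hφi : ∀ i u v, 0 ≤ breg (φi i) u v)
    (hxstar : xstar ∈ 𝒳) (hy : ∀ i, y i ∈ 𝒳) : 0 ≤ pdmmLyapunov φ φi ρ τ δ xstar νstar x y ν := by
  unfold pdmmLyapunov
  have hdual : 0 ≤ 1 / (2 * τ * ρ) * ∑ i, ‖νstar i - ν i‖ ^ 2 := by positivity
  have hy' : 0 ≤ ∑ i, breg φ xstar (y i) := Finset.sum_nonneg fun i _ => hφ _ hxstar _ (hy i)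
  have hx' : 0 ≤ ∑ i, δ i / ρ * breg (φi i) xstar (x i) :=
    Finset.sum_nonneg fun i _ => mul_nonneg (div_nonneg (hδ i) hρ.le) (hφi i _ _)
  linarith

theorem pdmmResidual_nonneg (hρ : 0 < ρ) (hγ : 0 ≤ γ) (hδ : ∀ i, 0 ≤ δ i)
    (hφ : ∀ u ∈ 𝒳, ∀ v ∈ 𝒳, 0 ≤ breg φ u v) (hφi : ∀ i u v, 0 ≤ breg (φi i) u v)
    (hy : ∀ i, y i ∈ 𝒳) (hx' : ∀ i, x' i ∈ 𝒳) : 0 ≤ pdmmResidual P φ φi ρ γ δ x y x' := by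
  unfold pdmmResidual
  have hcons : 0 ≤ γ / 2 * ∑ i, ‖x' i - ∑ j, P i j • x' j‖ ^ 2 := by positivity
  have hy' : 0 ≤ ∑ i, breg φ (x' i) (y i) := Finset.sum_nonneg fun i _ => hφ _ (hx' i) _ (hy i)
  have hx : 0 ≤ ∑ i, δ i / ρ * breg (φi i) (x' i) (x i) :=
    Finset.sum_nonneg fun i _ => mul_nonneg (div_nonneg (hδ i) hρ.le) (hφi i _ _)
  linarith

end PDMM

theorem sum_range_le_of_add_le {r V : ℕ → ℝ} (hV : ∀ t, 0 ≤ V t)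
    (h : ∀ t, r t + V (t + 1) ≤ V t) (T : ℕ) : ∑ t ∈ Finset.range T, r t ≤ V 0 :=
  calc ∑ t ∈ Finset.range T, r t ≤ ∑ t ∈ Finset.range T, (V t - V (t + 1)) :=
        Finset.sum_le_sum fun t _ => by linarith [h t]
    _ = V 0 - V T := Finset.sum_range_sub' V T
    _ ≤ V 0 := by linarith [hV T]

theorem bregman_pdmm_global_convergence_general {n m : ℕ}
    (𝒳 : Set (EuclideanSpace ℝ (Fin n)))
    (f : Fin m → EuclideanSpace ℝ (Fin n) → ℝ)
    (P : Matrix (Fin m) (Fin m) ℝ) (hPsym : P.IsSymm)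
    (hPnn : ∀ i j, 0 ≤ P i j) (hProw : ∀ i, ∑ j, P i j = 1) (hPpsd : P.PosSemidef)
    (φ : EuclideanSpace ℝ (Fin n) → ℝ)
    (φi : Fin m → EuclideanSpace ℝ (Fin n) → ℝ)
    (hφid : ∀ i, Differentiable ℝ (φi i)) (hφic : ∀ i, ConvexOn ℝ Set.univ (φi i))
    (μ p σ ρ τ γ : ℝ) (δ : Fin m → ℝ)
    (hμ : 0 < μ) (hp : 1 ≤ p)
    (hstrong : ∀ u ∈ 𝒳, ∀ v ∈ 𝒳, μ / 2 * lpnorm p (u - v) ^ 2 ≤ breg φ u v)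
    (hσ : σ = min 1 ((n : ℝ) ^ (2 / p - 1)))
    (hρ : 0 < ρ) (hτ : 0 < τ) (hδ : ∀ i, 0 ≤ δ i)
    (hγ0 : 0 < γ) (hτρ : τ ≤ ρ * (μ * σ - γ))
    (x y ν : ℕ → Fin m → EuclideanSpace ℝ (Fin n))
    (hxX : ∀ t i, x t i ∈ 𝒳) (hyX : ∀ t i, y t i ∈ 𝒳)
    (hmirror : ∀ t : ℕ, ∀ i, ∀ u ∈ 𝒳,
      0 ≤ ∑ j, P i j * ⟪gradient φ (y t i) - gradient φ (x t j), u - y t i⟫)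
    (hprimal : ∀ t : ℕ, ∀ i, ∃ g : EuclideanSpace ℝ (Fin n),
      (∀ v ∈ 𝒳, 0 ≤ ⟪g, x (t + 1) i - v⟫) ∧
      ∀ v, f i v ≥ f i (x (t + 1) i) +
        ⟪-ν t i + (∑ j, P i j • ν t j)
            - ρ • (gradient φ (x (t + 1) i) - gradient φ (y t i))
            - δ i • (gradient (φi i) (x (t + 1) i) - gradient (φi i) (x t i))
            - g, v - x (t + 1) i⟫)
    (hdual : ∀ t : ℕ, ∀ i, ν (t + 1) i =
      ν t i + τ • (x (t + 1) i - ∑ j, P i j • x (t + 1) j))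
    (xstar : EuclideanSpace ℝ (Fin n)) (hxstar : xstar ∈ 𝒳)
    (νstar : Fin m → EuclideanSpace ℝ (Fin n))
    (hkkt : ∀ i, ∃ g : EuclideanSpace ℝ (Fin n),
      (∀ v ∈ 𝒳, 0 ≤ ⟪g, xstar - v⟫) ∧
      ∀ v, f i v ≥ f i xstar +
        ⟪-νstar i + (∑ j, P i j • νstar j) - g, v - xstar⟫)
    (V : ℕ → ℝ)
    (hV : ∀ s, V s =
      1 / (2 * τ * ρ) * ∑ i, ‖νstar i - ν s i‖ ^ 2
        + (∑ i, breg φ xstar (y s i))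
        + ∑ i, δ i / ρ * breg (φi i) xstar (x s i))
    (R : ℕ → ℝ)
    (hR : ∀ t : ℕ, R (t + 1) =
      γ / 2 * ∑ i, ‖x (t + 1) i - ∑ j, P i j • x (t + 1) j‖ ^ 2
        + (∑ i, breg φ (x (t + 1) i) (y t i))
        + ∑ i, δ i / ρ * breg (φi i) (x (t + 1) i) (x t i)) :
    (∀ T : ℕ, ∑ t ∈ Finset.range T, R (t + 1) ≤ V 0) ∧
      Tendsto (fun t : ℕ => R (t + 1)) atTop (nhds 0) := by
  have hσ0 : 0 ≤ σ := hσ ▸ le_min zero_le_one (by positivity)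
  have hstrong₂ : ∀ u ∈ 𝒳, ∀ v ∈ 𝒳, μ * σ / 2 * ‖u - v‖ ^ 2 ≤ breg φ u v := fun u hu v hv =>
    calc μ * σ / 2 * ‖u - v‖ ^ 2 = μ / 2 * (σ * ‖u - v‖ ^ 2) := by ring
      _ ≤ μ / 2 * lpnorm p (u - v) ^ 2 := by
        gcongr
        exact hσ ▸ min_one_rpow_mul_sq_norm_le_lpnorm_sq hp (u - v)
      _ ≤ breg φ u v := hstrong u hu v hv
  have hbreg : ∀ u ∈ 𝒳, ∀ v ∈ 𝒳, 0 ≤ breg φ u v := fun u hu v hv =>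
    le_trans (by positivity) (hstrong₂ u hu v hv)
  have hbregi : ∀ i u v, 0 ≤ breg (φi i) u v := fun i => breg_nonneg (hφid i) (hφic i)
  have hdescent : ∀ t, R (t + 1) + V (t + 1) ≤ V t := fun t => by
    rw [hR, hV, hV]
    exact pdmmResidual_add_pdmmLyapunov_le hPsym hPnn hProw hPpsd hρ hτ (by positivity) hstrong₂
      hτρ hxstar hkkt (hxX (t + 1)) (hyX (t + 1)) (hprimal t) (hdual t) (hmirror (t + 1))
  have hsum := sum_range_le_of_add_le (fun s => hV s ▸
    pdmmLyapunov_nonneg hρ hτ hδ hbreg hbregi hxstar (hyX s)) hdescent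
  refine ⟨hsum, (summable_of_sum_range_le (fun t => ?_) hsum).tendsto_atTop_zero⟩
  rw [hR]
  exact pdmmResidual_nonneg hρ hγ0.le hδ hbreg hbregi (hyX t) (hxX (t + 1))

/-- Global convergence of Bregman PDMM: the residuals are summable against the
initial Lyapunov value, and hence converge to zero. -/
theorem bregman_pdmm_global_convergence {n m : ℕ}
    (𝒳 : Set (EuclideanSpace ℝ (Fin n)))
    (hXne : 𝒳.Nonempty) (hXclosed : IsClosed 𝒳) (hXconv : Convex ℝ 𝒳)
    (f : Fin m → EuclideanSpace ℝ (Fin n) → ℝ)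
    (hf : ∀ i, ConvexOn ℝ Set.univ (f i))
    (P : Matrix (Fin m) (Fin m) ℝ) (hPsym : P.IsSymm)
    (hPnn : ∀ i j, 0 ≤ P i j) (hProw : ∀ i, ∑ j, P i j = 1) (hPpsd : P.PosSemidef)
    (φ : EuclideanSpace ℝ (Fin n) → ℝ)
    (hφd : Differentiable ℝ φ) (hφc : ConvexOn ℝ Set.univ φ)
    (φi : Fin m → EuclideanSpace ℝ (Fin n) → ℝ)
    (hφid : ∀ i, Differentiable ℝ (φi i)) (hφic : ∀ i, ConvexOn ℝ Set.univ (φi i))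
    (μ p σ ρ τ γ : ℝ) (δ : Fin m → ℝ)
    (hμ : 0 < μ) (hp : 1 ≤ p)
    (hstrong : ∀ u ∈ 𝒳, ∀ v ∈ 𝒳, μ / 2 * lpnorm p (u - v) ^ 2 ≤ breg φ u v)
    (hσ : σ = min 1 ((n : ℝ) ^ (2 / p - 1)))
    (hρ : 0 < ρ) (hτ : 0 < τ) (hδ : ∀ i, 0 ≤ δ i)
    (hγ0 : 0 < γ) (hγ : γ < μ * σ) (hτρ : τ ≤ ρ * (μ * σ - γ))
    (x y ν : ℕ → Fin m → EuclideanSpace ℝ (Fin n))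
    (hxX : ∀ t i, x t i ∈ 𝒳) (hyX : ∀ t i, y t i ∈ 𝒳)
    (hmirror : ∀ t : ℕ, ∀ i, ∀ u ∈ 𝒳,
      0 ≤ ∑ j, P i j * ⟪gradient φ (y t i) - gradient φ (x t j), u - y t i⟫)
    (hprimal : ∀ t : ℕ, ∀ i, ∃ g : EuclideanSpace ℝ (Fin n),
      (∀ v ∈ 𝒳, 0 ≤ ⟪g, x (t + 1) i - v⟫) ∧
      ∀ v, f i v ≥ f i (x (t + 1) i) +
        ⟪-ν t i + (∑ j, P i j • ν t j)
            - ρ • (gradient φ (x (t + 1) i) - gradient φ (y t i))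
            - δ i • (gradient (φi i) (x (t + 1) i) - gradient (φi i) (x t i))
            - g, v - x (t + 1) i⟫)
    (hdual : ∀ t : ℕ, ∀ i, ν (t + 1) i =
      ν t i + τ • (x (t + 1) i - ∑ j, P i j • x (t + 1) j))
    (xstar : EuclideanSpace ℝ (Fin n)) (hxstar : xstar ∈ 𝒳)
    (νstar : Fin m → EuclideanSpace ℝ (Fin n))
    (hkkt : ∀ i, ∃ g : EuclideanSpace ℝ (Fin n),
      (∀ v ∈ 𝒳, 0 ≤ ⟪g, xstar - v⟫) ∧
      ∀ v, f i v ≥ f i xstar +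
        ⟪-νstar i + (∑ j, P i j • νstar j) - g, v - xstar⟫)
    (V : ℕ → ℝ)
    (hV : ∀ s, V s =
      1 / (2 * τ * ρ) * ∑ i, ‖νstar i - ν s i‖ ^ 2
        + (∑ i, breg φ xstar (y s i))
        + ∑ i, δ i / ρ * breg (φi i) xstar (x s i))
    (R : ℕ → ℝ)
    (hR : ∀ t : ℕ, R (t + 1) =
      γ / 2 * ∑ i, ‖x (t + 1) i - ∑ j, P i j • x (t + 1) j‖ ^ 2
        + (∑ i, breg φ (x (t + 1) i) (y t i))
        + ∑ i, δ i / ρ * breg (φi i) (x (t + 1) i) (x t i)) :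
    (∀ T : ℕ, ∑ t ∈ Finset.range T, R (t + 1) ≤ V 0) ∧
      Tendsto (fun t : ℕ => R (t + 1)) atTop (nhds 0) :=
  bregman_pdmm_global_convergence_general 𝒳 f P hPsym hPnn hProw hPpsd φ φi hφid hφic μ p σ ρ τ γ δ
    hμ hp hstrong hσ hρ hτ hδ hγ0 hτρ x y ν hxX hyX hmirror hprimal hdual xstar hxstar νstar hkkt V
    hV R hR
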